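/- arXiv:1007.2483 — 2 statements merged into one kernel-verified Lean document; each statement's English description precedes it below -/
import Mathlib

section
/- Let E : [α, β] → ℝ be a C¹ function with E'(0) = 0 (where 0 ∈ (α, β)), and suppose E satisfies the differential equation (e^{F} E')' = C e^{F} pointwise on [α, β], where F : [α, β] → ℝ is C¹ and C : [α, β] → ℝ is continuous with C(x) < 0 for all x ∈ (α, β). Then E'(x) < 0 for all x ∈ (0, β] and E'(x) > 0 for all x ∈ [α, 0). -/
/-- Integrating factor argument (Corollary 2.6 of the paper): if `E' 0 = 0` and
`(e^F E')' = C e^F` with `C < 0` on `(α, β)`, then `E' < 0` on `(0, β]` and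
`E' > 0` on `[α, 0)`. -/
theorem stmt1 (α β : ℝ) (hα : α < 0) (hβ : 0 < β)
    (E E' F F' C : ℝ → ℝ)
    (hE : ∀ x ∈ Set.Icc α β, HasDerivAt E (E' x) x)
    (hF : ∀ x ∈ Set.Icc α β, HasDerivAt F (F' x) x)
    (hE'cont : ContinuousOn E' (Set.Icc α β))
    (hode : ∀ x ∈ Set.Icc α β,
      HasDerivAt (fun y => Real.exp (F y) * E' y) (C x * Real.exp (F x)) x)
    (hCcont : ContinuousOn C (Set.Icc α β))
    (hCneg : ∀ x ∈ Set.Ioo α β, C x < 0)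
    (hE'0 : E' 0 = 0) :
    (∀ x ∈ Set.Ioc 0 β, E' x < 0) ∧ (∀ x ∈ Set.Ico α 0, 0 < E' x) := by
  set G : ℝ → ℝ := fun y => Real.exp (F y) * E' y with hG
  have h0mem : (0 : ℝ) ∈ Set.Icc α β := ⟨hα.le, hβ.le⟩
  have hGcont : ContinuousOn G (Set.Icc α β) := fun x hx =>
    ((hode x hx).continuousAt).continuousWithinAt
  have hGanti : StrictAntiOn G (Set.Icc α β) := by
    apply StrictAntiOn.mono ?_ (le_refl (Set.Icc α β))
    apply strictAntiOn_of_deriv_neg (convex_Icc α β) hGcont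
    intro x hx
    rw [interior_Icc] at hx
    rw [(hode x (Set.Ioo_subset_Icc_self hx)).deriv]
    exact mul_neg_of_neg_of_pos (hCneg x hx) (Real.exp_pos _)
  have hG0 : G 0 = 0 := by simp [hG, hE'0]
  constructor
  · intro x hx
    have hxI : x ∈ Set.Icc α β := ⟨hα.le.trans hx.1.le, hx.2⟩
    have := hGanti h0mem hxI hx.1
    rw [hG0] at this; simp only [hG] at this
    nlinarith [Real.exp_pos (F x)]
  · intro x hx
    have hxI : x ∈ Set.Icc α β := ⟨hx.1, hx.2.le.trans hβ.le⟩
    have := hGanti hxI h0mem hx.2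
    rw [hG0] at this; simp only [hG] at this
    nlinarith [Real.exp_pos (F x)]
end

section
/- Let A and B be self-adjoint operators with A ≥ 0, B bounded, and suppose A + B ≥ c₀ > 0 in form sense. Then there exists C' > 0 (depending only on c₀) such that for all t ∈ [0, 1/2]: A + tB ≥ (1/C')(A + t). -/
open scoped RealInnerProductSpace

/-- Operator (quadratic form) version of Lemma 2.1 of [KN1]: if `A ≥ 0` and
`A + B ≥ c₀ > 0` in form sense, then there is `C' > 0` with
`A + tB ≥ (1/C')(A + t)` for all `t ∈ [0, 1/2]`. -/
theorem stmt9 {F : Type*} [NormedAddCommGroup F] [InnerProductSpace ℝ F]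
    (A B : F →L[ℝ] F) (c₀ : ℝ) (hc₀ : 0 < c₀)
    (hA : ∀ ψ : F, 0 ≤ ⟪ψ, A ψ⟫)
    (hAB : ∀ ψ : F, c₀ * ‖ψ‖ ^ 2 ≤ ⟪ψ, (A + B) ψ⟫) :
    ∃ C' > (0 : ℝ), ∀ t ∈ Set.Icc (0 : ℝ) (1 / 2), ∀ ψ : F,
      (1 / C') * (⟪ψ, A ψ⟫ + t * ‖ψ‖ ^ 2) ≤ ⟪ψ, (A + t • B) ψ⟫ := by
  refine ⟨max 2 (1 / c₀), lt_max_of_lt_left (by norm_num), ?_⟩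
  intro t ht ψ
  obtain ⟨ht0, ht2⟩ := ht
  have hC : (0:ℝ) < max 2 (1 / c₀) := lt_max_of_lt_left (by norm_num)
  have hinv : 1 / max 2 (1 / c₀) ≤ 1 / 2 :=
    one_div_le_one_div_of_le (by norm_num) (le_max_left _ _)
  have hinvc : 1 / max 2 (1 / c₀) ≤ c₀ := by
    rw [div_le_iff₀ hC]
    calc (1:ℝ) = c₀ * (1 / c₀) := by field_simp
    _ ≤ c₀ * max 2 (1 / c₀) := by
        exact mul_le_mul_of_nonneg_left (le_max_right _ _) hc₀.le
  have hsum : ⟪ψ, (A + B) ψ⟫ = ⟪ψ, A ψ⟫ + ⟪ψ, B ψ⟫ := by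
    simp [inner_add_right]
  have hexp : ⟪ψ, (A + t • B) ψ⟫ = ⟪ψ, A ψ⟫ + t * ⟪ψ, B ψ⟫ := by
    simp [inner_add_right, inner_smul_right]
  have key : ⟪ψ, (A + t • B) ψ⟫ = (1 - t) * ⟪ψ, A ψ⟫ + t * ⟪ψ, (A + B) ψ⟫ := by
    rw [hexp, hsum]; ring
  have h1 : (1 / max 2 (1 / c₀)) * ⟪ψ, A ψ⟫ ≤ (1 - t) * ⟪ψ, A ψ⟫ :=
    mul_le_mul_of_nonneg_right (by linarith) (hA ψ)
  have h2 : (1 / max 2 (1 / c₀)) * (t * ‖ψ‖ ^ 2) ≤ t * ⟪ψ, (A + B) ψ⟫ := by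
    have := hAB ψ
    have hn : (0:ℝ) ≤ ‖ψ‖ ^ 2 := by positivity
    calc (1 / max 2 (1 / c₀)) * (t * ‖ψ‖ ^ 2) = t * ((1 / max 2 (1 / c₀)) * ‖ψ‖ ^ 2) := by ring
    _ ≤ t * (c₀ * ‖ψ‖ ^ 2) := by
        exact mul_le_mul_of_nonneg_left (mul_le_mul_of_nonneg_right hinvc hn) ht0
    _ ≤ t * ⟪ψ, (A + B) ψ⟫ := mul_le_mul_of_nonneg_left this ht0
  rw [key]
  nlinarith [h1, h2]
end
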